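/- Let Ω ⊂ ℝ² be a measurable set, (fₙ) a sequence in L²(Ω), and (pⁿ) a sequence of measurable functions on Ω with values in [0,1]. Suppose pⁿ → p* almost everywhere on Ω with ∫_Ω p* > 0, and there exists A > 0 such that ∫_Ω fₙ² pⁿ ≤ A for all n. Then there exists ρ ∈ L²(Ω) with ρ ≥ 0, ∫_Ω ρ = 1, and a constant B > 0 such that |∫_Ω fₙ ρ| ≤ B for all n. -/

import Mathlib

/-!
Since `∫ p* > 0`, the function `p*` is at least some `δ > 0` on a set of positive finite
measure, and by Egorov's theorem `pⁿ ≥ δ / 2` holds on a smaller set `S`, still of positive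
measure, for all large `n`. There the weighted bound gives `∫_S fₙ² ≤ 2A / δ`; together with
the finitely many remaining indices, `∫_S fₙ²` is bounded. Take `ρ` to be the normalised
indicator of `S`: by `|t| ≤ (1 + t²) / 2`, `|∫ fₙ ρ|` is bounded by `(|S| + sup ∫_S fₙ²) / (2|S|)`.
-/

open MeasureTheory Filter Set Topology
open scoped ENNReal

section

variable {α : Type*} [MeasurableSpace α] {μ : Measure α}

lemma exists_measure_setOf_le_pos_of_integral_pos {g : α → ℝ} (hg : 0 < ∫ x, g x ∂μ) :
    ∃ δ > 0, 0 < μ {x | δ ≤ g x} := by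
  by_contra! h
  have hnull : μ {x | 0 < g x} = 0 := by
    refine measure_mono_null (fun x (hx : 0 < g x) => ?_)
      (measure_iUnion_null fun n : ℕ => nonpos_iff_eq_zero.1 (h ((n : ℝ) + 1)⁻¹ (by positivity)))
    obtain ⟨n, hn⟩ := exists_nat_one_div_lt hx
    exact mem_iUnion.2 ⟨n, by simpa only [mem_ofPred_eq, one_div] using hn.le⟩
  have hg_nonpos : ∀ᵐ x ∂μ, g x ≤ 0 := by
    simpa only [ae_iff, not_le] using hnull
  exact hg.not_ge (integral_nonpos_of_ae hg_nonpos)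

lemma exists_measurableSet_eventually_le_of_ae_tendsto {p : ℕ → α → ℝ} {g : α → ℝ}
    (hp : ∀ n, Measurable (p n))
    (hpg : ∀ᵐ x ∂μ, Tendsto (fun n => p n x) atTop (𝓝 (g x))) (hg : 0 < ∫ x, g x ∂μ) :
    ∃ S, MeasurableSet S ∧ 0 < μ S ∧ μ S < ∞ ∧
      ∃ δ > 0, ∀ᶠ n in atTop, ∀ x ∈ S, δ ≤ p n x := by
  have hg_ae : AEMeasurable g μ :=
    aemeasurable_of_tendsto_metrizable_ae _ (fun n => (hp n).aemeasurable) hpg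
  set g' := hg_ae.mk g
  have hpg' : ∀ᵐ x ∂μ, Tendsto (fun n => p n x) atTop (𝓝 (g' x)) := by
    filter_upwards [hpg, hg_ae.ae_eq_mk] with x hx hgx
    rwa [hgx] at hx
  have hg' : 0 < ∫ x, g' x ∂μ := by rwa [← integral_congr_ae hg_ae.ae_eq_mk]
  have hg'_int : Integrable g' μ := by
    by_contra h
    exact hg'.ne' (integral_undef h)
  obtain ⟨δ, hδ, hT_pos⟩ := exists_measure_setOf_le_pos_of_integral_pos hg'
  set T := {x | δ ≤ g' x}
  have hT : MeasurableSet T := measurableSet_le measurable_const hg_ae.measurable_mk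
  have hT_fin : μ T < ∞ := hg'_int.measure_ge_lt_top hδ
  obtain ⟨r, -, hr_pos, hr_lt⟩ := ENNReal.lt_iff_exists_real_btwn.1 hT_pos
  obtain ⟨t, -, ht, ht_le, hunif⟩ :=
    tendstoUniformlyOn_of_ae_tendsto (fun n => (hp n).stronglyMeasurable)
      hg_ae.measurable_mk.stronglyMeasurable hT hT_fin.ne (hpg'.mono fun x hx _ => hx)
      (ENNReal.ofReal_pos.1 hr_pos)
  refine ⟨T \ t, hT.diff ht, ?_, (measure_mono sdiff_subset).trans_lt hT_fin,
    δ / 2, half_pos hδ, ?_⟩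
  · calc 0 < μ T - μ t := tsub_pos_of_lt (ht_le.trans_lt hr_lt)
      _ ≤ μ (T \ t) := le_measure_sdiff
  · filter_upwards [Metric.tendstoUniformlyOn_iff.1 hunif (δ / 2) (half_pos hδ)] with n hn x hx
    have hgx : δ ≤ g' x := hx.1
    have hdist := abs_lt.1 (Real.dist_eq _ _ ▸ hn x hx)
    linarith [hdist.2]

lemma mul_setIntegral_sq_le_integral_sq_mul {f w : α → ℝ} {S : Set α} {δ : ℝ}
    (hS : MeasurableSet S) (hf : Integrable (fun x => f x ^ 2) μ)
    (hfw : Integrable (fun x => f x ^ 2 * w x) μ) (hw : ∀ x, 0 ≤ w x) (hδw : ∀ x ∈ S, δ ≤ w x) :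
    δ * ∫ x in S, f x ^ 2 ∂μ ≤ ∫ x, f x ^ 2 * w x ∂μ :=
  calc δ * ∫ x in S, f x ^ 2 ∂μ = ∫ x in S, f x ^ 2 * δ ∂μ := by
        rw [integral_mul_const, mul_comm]
    _ ≤ ∫ x in S, f x ^ 2 * w x ∂μ :=
        setIntegral_mono_on (hf.mul_const δ).integrableOn hfw.integrableOn hS
          fun x hx => mul_le_mul_of_nonneg_left (hδw x hx) (sq_nonneg _)
    _ ≤ ∫ x, f x ^ 2 * w x ∂μ :=
        setIntegral_le_integral hfw (ae_of_all _ fun x => mul_nonneg (sq_nonneg _) (hw x))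

lemma abs_integral_le_half_measureReal_add_integral_sq [IsFiniteMeasure μ] {f : α → ℝ}
    (hf : MemLp f 2 μ) : |∫ x, f x ∂μ| ≤ (μ.real univ + ∫ x, f x ^ 2 ∂μ) / 2 := by
  have hf2 := hf.integrable_sq
  calc |∫ x, f x ∂μ| ≤ ∫ x, |f x| ∂μ := abs_integral_le_integral_abs
    _ ≤ ∫ x, (1 + f x ^ 2) / 2 ∂μ :=
        integral_mono (hf.integrable one_le_two).abs (((integrable_const 1).add hf2).div_const 2)
          fun x => by nlinarith [sq_nonneg (|f x| - 1), sq_abs (f x)]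
    _ = (μ.real univ + ∫ x, f x ^ 2 ∂μ) / 2 := by
        rw [integral_div, integral_add (integrable_const 1) hf2, integral_const, smul_eq_mul,
          mul_one]

lemma integral_mul_indicator_const (f : α → ℝ) {S : Set α} (hS : MeasurableSet S) (c : ℝ) :
    ∫ x, f x * S.indicator (fun _ => c) x ∂μ = (∫ x in S, f x ∂μ) * c := by
  have hind : (fun x => f x * S.indicator (fun _ => c) x) = S.indicator fun x => f x * c :=
    funext fun x => (indicator_mul_right S f _).symm
  rw [hind, integral_indicator hS, integral_mul_const]

end

theorem stmt_0_general (Ω : Set (EuclideanSpace ℝ (Fin 2)))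
    (f : ℕ → EuclideanSpace ℝ (Fin 2) → ℝ)
    (hf : ∀ n, MemLp (f n) 2 (volume.restrict Ω))
    (p : ℕ → EuclideanSpace ℝ (Fin 2) → ℝ)
    (hpmeas : ∀ n, Measurable (p n))
    (hprange : ∀ n x, p n x ∈ Set.Icc (0 : ℝ) 1)
    (pstar : EuclideanSpace ℝ (Fin 2) → ℝ)
    (hconv : ∀ᵐ x ∂(volume.restrict Ω),
      Tendsto (fun n => p n x) atTop (nhds (pstar x)))
    (hpos : 0 < ∫ x in Ω, pstar x)
    (A : ℝ)
    (hbound : ∀ n, ∫ x in Ω, (f n x) ^ 2 * p n x ≤ A) :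
    ∃ ρ : EuclideanSpace ℝ (Fin 2) → ℝ,
      MemLp ρ 2 (volume.restrict Ω) ∧ (∀ x, 0 ≤ ρ x) ∧
      (∫ x in Ω, ρ x) = 1 ∧
      ∃ B : ℝ, 0 < B ∧ ∀ n, |∫ x in Ω, f n x * ρ x| ≤ B := by
  set μ := volume.restrict Ω
  obtain ⟨S, hS, hS_pos, hS_fin, δ, hδ, hlow⟩ :=
    exists_measurableSet_eventually_le_of_ae_tendsto hpmeas hconv hpos
  have hfw (n : ℕ) : Integrable (fun x => f n x ^ 2 * p n x) μ :=
    (hf n).integrable_sq.mul_bdd (hpmeas n).aestronglyMeasurable (ae_of_all _ fun x => by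
      rw [Real.norm_eq_abs, abs_of_nonneg (hprange n x).1]; exact (hprange n x).2)
  obtain ⟨C, hC⟩ : BddAbove (range fun n => ∫ x in S, f n x ^ 2 ∂μ) := by
    refine (isBoundedUnder_of_eventually_le (a := A / δ) ?_).bddAbove_range
    filter_upwards [hlow] with n hn
    rw [le_div_iff₀' hδ]
    exact (mul_setIntegral_sq_le_integral_sq_mul hS (hf n).integrable_sq (hfw n)
      (fun x => (hprange n x).1) hn).trans (hbound n)
  have hC_nonneg : 0 ≤ C :=
    (setIntegral_nonneg hS fun x _ => sq_nonneg (f 0 x)).trans (hC ⟨0, rfl⟩)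
  set m := μ.real S
  have hm : 0 < m := ENNReal.toReal_pos hS_pos.ne' hS_fin.ne
  have : IsFiniteMeasure (μ.restrict S) := isFiniteMeasure_restrict.2 hS_fin.ne
  refine ⟨S.indicator fun _ => m⁻¹, memLp_indicator_const 2 hS _ (Or.inr hS_fin.ne),
    indicator_nonneg fun _ _ => inv_nonneg.2 hm.le, ?_, (m + C) / 2 * m⁻¹, by positivity,
    fun n => ?_⟩
  · rw [integral_indicator_const _ hS, smul_eq_mul, mul_inv_cancel₀ hm.ne']
  · rw [integral_mul_indicator_const _ hS, abs_mul, abs_inv, abs_of_pos hm]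
    gcongr
    calc |∫ x in S, f n x ∂μ| ≤ (m + ∫ x in S, f n x ^ 2 ∂μ) / 2 := by
          simpa only [measureReal_restrict_apply_univ] using
            abs_integral_le_half_measureReal_add_integral_sq ((hf n).restrict S)
      _ ≤ (m + C) / 2 := by gcongr; exact hC ⟨n, rfl⟩

/-- Lemma on bounded weighted means: Let `Ω ⊆ ℝ²` be measurable, `(fₙ)` a
sequence in `L²(Ω)`, `(pⁿ)` measurable with values in `[0,1]`, `pⁿ → p*` a.e. on `Ω`,
`∫_Ω p* > 0`, and `∫_Ω fₙ² pⁿ ≤ A` for all `n`. Then there is `ρ ∈ L²(Ω)` with `ρ ≥ 0`,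
`∫_Ω ρ = 1`, and `B > 0` with `|∫_Ω fₙ ρ| ≤ B` for all `n`. -/
theorem stmt_0 (Ω : Set (EuclideanSpace ℝ (Fin 2))) (hΩ : MeasurableSet Ω)
    (f : ℕ → EuclideanSpace ℝ (Fin 2) → ℝ)
    (hf : ∀ n, MemLp (f n) 2 (volume.restrict Ω))
    (p : ℕ → EuclideanSpace ℝ (Fin 2) → ℝ)
    (hpmeas : ∀ n, Measurable (p n))
    (hprange : ∀ n x, p n x ∈ Set.Icc (0 : ℝ) 1)
    (pstar : EuclideanSpace ℝ (Fin 2) → ℝ)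
    (hconv : ∀ᵐ x ∂(volume.restrict Ω),
      Tendsto (fun n => p n x) atTop (nhds (pstar x)))
    (hpos : 0 < ∫ x in Ω, pstar x)
    (A : ℝ) (hA : 0 < A)
    (hbound : ∀ n, ∫ x in Ω, (f n x) ^ 2 * p n x ≤ A) :
    ∃ ρ : EuclideanSpace ℝ (Fin 2) → ℝ,
      MemLp ρ 2 (volume.restrict Ω) ∧ (∀ x, 0 ≤ ρ x) ∧
      (∫ x in Ω, ρ x) = 1 ∧
      ∃ B : ℝ, 0 < B ∧ ∀ n, |∫ x in Ω, f n x * ρ x| ≤ B :=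
  stmt_0_general Ω f hf p hpmeas hprange pstar hconv hpos A hbound
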